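/- arXiv:1205.2102 — 2 statements merged into one kernel-verified Lean document; each statement's English description precedes it below -/
import Mathlib

section
/- Let G be a group, S ⊆ G with S ∪ S⁻¹ generating G, and let C be the submonoid of G generated by S (the cone generated by S). Then the oscillation pseudo-norm ν_osc = ν⁺ − ν⁻ is non-degenerate (ν_osc(g) = 0 implies g = 1) if and only if the relation ≤_C induced by C is antisymmetric, i.e. C ∩ C⁻¹ = {1}. -/
/-!
A word over `S ∪ S⁻¹` with no letter from `S⁻¹` is a product of elements of `S`, so
`ν⁻(g) = 0` exactly when `g ∈ C`; reversing and inverting words swaps the two kinds of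
letters, so `ν⁺(g) = 0` exactly when `g⁻¹ ∈ C`. Since `ν_osc = ν⁺ + |ν⁻|` is a sum of
natural numbers, `ν_osc(g) = 0` means `g ∈ C ∩ C⁻¹`.
-/

theorem Nat.sInf_eq_zero_iff_of_nonempty {s : Set ℕ} (hs : s.Nonempty) : sInf s = 0 ↔ 0 ∈ s :=
  Nat.sInf_eq_zero.trans (or_iff_left hs.ne_empty)

namespace SignedWord

variable {G : Type*} [Group G] (S : Set G)

/-- A letter `(x, true)` stands for `x ∈ S`, a letter `(x, false)` for `x ∈ S⁻¹`. -/
def IsWord (l : List (G × Bool)) : Prop :=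
  ∀ p ∈ l, (p.2 = true → p.1 ∈ S) ∧ (p.2 = false → p.1⁻¹ ∈ S)

def reverseInv (l : List (G × Bool)) : List (G × Bool) :=
  (l.map fun p => (p.1⁻¹, !p.2)).reverse

variable {S}

theorem IsWord.reverseInv {l : List (G × Bool)} (hl : IsWord S l) :
    IsWord S (reverseInv l) := by
  intro p hp
  obtain ⟨q, hq, rfl⟩ := List.mem_map.mp (List.mem_reverse.mp hp)
  cases h : q.2 <;> simp [h, hl q hq]

theorem prod_reverseInv (l : List (G × Bool)) :
    ((reverseInv l).map Prod.fst).prod = ((l.map Prod.fst).prod)⁻¹ := by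
  simp [reverseInv, List.map_reverse, List.prod_inv_reverse, Function.comp_def]

theorem countP_reverseInv (l : List (G × Bool)) :
    (reverseInv l).countP (fun p => p.2) = l.countP (fun p => !p.2) := by
  simp [reverseInv, List.countP_map, Function.comp_def]

theorem countP_not_reverseInv (l : List (G × Bool)) :
    (reverseInv l).countP (fun p => !p.2) = l.countP (fun p => p.2) := by
  simp [reverseInv, List.countP_map, Function.comp_def]

theorem mem_closure_iff_exists_positive_word {g : G} :
    g ∈ Submonoid.closure S ↔ ∃ l : List (G × Bool),
      IsWord S l ∧ (l.map Prod.fst).prod = g ∧ l.countP (fun p => !p.2) = 0 := by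
  constructor
  · intro hg
    obtain ⟨m, hmS, rfl⟩ := Submonoid.exists_list_of_mem_closure hg
    refine ⟨m.map (·, true), ?_, by simp [Function.comp_def], by simp [List.countP_map]⟩
    intro p hp
    obtain ⟨x, hx, rfl⟩ := List.mem_map.mp hp
    exact ⟨fun _ => hmS x hx, by simp⟩
  · rintro ⟨l, hl, rfl, hcount⟩
    refine Submonoid.list_prod_mem _ fun x hx => ?_
    obtain ⟨p, hp, rfl⟩ := List.mem_map.mp hx
    have hpos : p.2 = true := by simpa using List.countP_eq_zero.mp hcount p hp
    exact Submonoid.subset_closure ((hl p hp).1 hpos)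

theorem inv_mem_closure_iff_exists_negative_word {g : G} :
    g⁻¹ ∈ Submonoid.closure S ↔ ∃ l : List (G × Bool),
      IsWord S l ∧ (l.map Prod.fst).prod = g ∧ l.countP (fun p => p.2) = 0 := by
  rw [mem_closure_iff_exists_positive_word]
  constructor
  · rintro ⟨l, hl, hprod, hcount⟩
    exact ⟨reverseInv l, hl.reverseInv, by rw [prod_reverseInv, hprod, inv_inv],
      by rwa [countP_reverseInv]⟩
  · rintro ⟨l, hl, rfl, hcount⟩
    exact ⟨reverseInv l, hl.reverseInv, prod_reverseInv l, by rwa [countP_not_reverseInv]⟩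

end SignedWord

/-- The oscillation pseudo-norm `ν_osc = ν⁺ − ν⁻` is non-degenerate if and only if
the cone `C` generated by `S` satisfies `C ∩ C⁻¹ = {1}`, i.e. `≤_C` is antisymmetric. -/
theorem stmt_10 {G : Type*} [Group G] (S : Set G)
    (hgen : ∀ g : G, ∃ l : List (G × Bool),
      (∀ p ∈ l, (p.2 = true → p.1 ∈ S) ∧ (p.2 = false → p.1⁻¹ ∈ S)) ∧
      (l.map Prod.fst).prod = g)
    (nplus nminus : G → ℕ)
    (hplus : ∀ g : G, nplus g = sInf {n : ℕ | ∃ l : List (G × Bool),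
      (∀ p ∈ l, (p.2 = true → p.1 ∈ S) ∧ (p.2 = false → p.1⁻¹ ∈ S)) ∧
      (l.map Prod.fst).prod = g ∧ l.countP (fun p => p.2) = n})
    (hminus : ∀ g : G, nminus g = sInf {n : ℕ | ∃ l : List (G × Bool),
      (∀ p ∈ l, (p.2 = true → p.1 ∈ S) ∧ (p.2 = false → p.1⁻¹ ∈ S)) ∧
      (l.map Prod.fst).prod = g ∧ l.countP (fun p => !p.2) = n})
    :
    (∀ g : G, (nplus g : ℤ) - (-(nminus g : ℤ)) = 0 → g = 1) ↔
      (∀ g : G, g ∈ Submonoid.closure S → g⁻¹ ∈ Submonoid.closure S → g = 1) := by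
  have hminus0 (g : G) : nminus g = 0 ↔ g ∈ Submonoid.closure S := by
    rw [hminus, Nat.sInf_eq_zero_iff_of_nonempty,
      SignedWord.mem_closure_iff_exists_positive_word]
    · rfl
    · obtain ⟨l, hl, hprod⟩ := hgen g
      exact ⟨_, l, hl, hprod, rfl⟩
  have hplus0 (g : G) : nplus g = 0 ↔ g⁻¹ ∈ Submonoid.closure S := by
    rw [hplus, Nat.sInf_eq_zero_iff_of_nonempty,
      SignedWord.inv_mem_closure_iff_exists_negative_word]
    · rfl
    · obtain ⟨l, hl, hprod⟩ := hgen g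
      exact ⟨_, l, hl, hprod, rfl⟩
  have hosc (g : G) :
      (nplus g : ℤ) - (-(nminus g : ℤ)) = 0 ↔ nplus g = 0 ∧ nminus g = 0 := by
    omega
  simp only [hosc, hplus0, hminus0]
  exact ⟨fun h g hg hg' => h g ⟨hg', hg⟩, fun h g hg => h g hg.2 hg.1⟩
end

section
/- Let G be a group, S ⊆ G with S ∪ S⁻¹ generating G and S invariant by conjugation, and let C be the cone generated by S. Assume C ∩ C⁻¹ = {1}, so that ≤_C is a bi-invariant partial order and ν_osc = ν⁺ − ν⁻ is a non-degenerate conjugation-invariant norm. Then the induced metric d(a,b) = ν_osc(a⁻¹b) is compatible with the partial order: if 1 ≤_C a ≤_C b then ν_osc(a) ≤ ν_osc(b). Equivalently, for a ≤_C b ≤_C c one has d(a,b) ≤ d(a,c). -/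
/-!
On the cone `C` a positive word shows `ν⁻ = 0`, so `ν_osc = ν⁺` there. If `a⁻¹ b ∈ C`, appending
to any word for `b` the formal inverse of a positive word for `a⁻¹ b` gives a word for `a` with
no additional letters from `S`; hence `ν⁺ a ≤ ν⁺ b`.
-/

namespace SignedWord

variable {G : Type*} [Group G] (S : Set G)

def posCounts (g : G) : Set ℕ :=
  {n | ∃ l : List (G × Bool), IsWord S l ∧ (l.map Prod.fst).prod = g ∧ l.countP (·.2) = n}

def negCounts (g : G) : Set ℕ :=
  {n | ∃ l : List (G × Bool), IsWord S l ∧ (l.map Prod.fst).prod = g ∧ l.countP (!·.2) = n}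

variable {S}

lemma IsWord.append {l₁ l₂ : List (G × Bool)} (h₁ : IsWord S l₁) (h₂ : IsWord S l₂) :
    IsWord S (l₁ ++ l₂) := by
  intro p hp
  rcases List.mem_append.mp hp with h | h
  exacts [h₁ p h, h₂ p h]

lemma exists_positive_word {g : G} (hg : g ∈ Submonoid.closure S) :
    ∃ l : List (G × Bool), IsWord S l ∧ (l.map Prod.fst).prod = g ∧ l.countP (!·.2) = 0 := by
  obtain ⟨L, hLS, rfl⟩ := Submonoid.exists_list_of_mem_closure hg
  refine ⟨L.map (·, true), ?_, by simp [Function.comp_def], by simp [List.countP_map]⟩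
  simp only [IsWord, List.mem_map]
  rintro _ ⟨x, hx, rfl⟩
  exact ⟨fun _ => hLS x hx, by simp⟩

lemma exists_negative_word_inv {g : G} (hg : g ∈ Submonoid.closure S) :
    ∃ l : List (G × Bool), IsWord S l ∧ (l.map Prod.fst).prod = g⁻¹ ∧ l.countP (·.2) = 0 := by
  obtain ⟨L, hLS, rfl⟩ := Submonoid.exists_list_of_mem_closure hg
  refine ⟨L.reverse.map (·⁻¹, false), ?_, ?_, by simp [List.countP_map]⟩
  · simp only [IsWord, List.mem_map, List.mem_reverse]
    rintro _ ⟨x, hx, rfl⟩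
    exact ⟨by simp, fun _ => by simpa using hLS x hx⟩
  · simp [Function.comp_def, List.prod_inv_reverse]

lemma zero_mem_negCounts {g : G} (hg : g ∈ Submonoid.closure S) : 0 ∈ negCounts S g :=
  exists_positive_word hg

lemma posCounts_nonempty {g : G} (hg : g ∈ Submonoid.closure S) : (posCounts S g).Nonempty := by
  obtain ⟨l, hl, hprod, -⟩ := exists_positive_word hg
  exact ⟨_, l, hl, hprod, rfl⟩

lemma posCounts_subset_mul_inv (b : G) {c : G} (hc : c ∈ Submonoid.closure S) :
    posCounts S b ⊆ posCounts S (b * c⁻¹) := by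
  rintro _ ⟨l, hl, rfl, rfl⟩
  obtain ⟨m, hm, hmprod, hmcount⟩ := exists_negative_word_inv hc
  exact ⟨l ++ m, hl.append hm, by simp [hmprod], by simp [List.countP_append, hmcount]⟩

end SignedWord

theorem stmt_11_general {G : Type*} [Group G] (S : Set G)
    (nplus nminus : G → ℕ)
    (hplus : ∀ g : G, nplus g = sInf {n : ℕ | ∃ l : List (G × Bool),
      (∀ p ∈ l, (p.2 = true → p.1 ∈ S) ∧ (p.2 = false → p.1⁻¹ ∈ S)) ∧
      (l.map Prod.fst).prod = g ∧ l.countP (fun p => p.2) = n})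
    (hminus : ∀ g : G, nminus g = sInf {n : ℕ | ∃ l : List (G × Bool),
      (∀ p ∈ l, (p.2 = true → p.1 ∈ S) ∧ (p.2 = false → p.1⁻¹ ∈ S)) ∧
      (l.map Prod.fst).prod = g ∧ l.countP (fun p => !p.2) = n}) :
    ∀ a b : G, a ∈ Submonoid.closure S → a⁻¹ * b ∈ Submonoid.closure S →
      (nplus a : ℤ) - (-(nminus a : ℤ)) ≤ (nplus b : ℤ) - (-(nminus b : ℤ)) := by
  intro a b ha hc
  have hb : b ∈ Submonoid.closure S := by simpa using mul_mem ha hc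
  have hminus_zero : ∀ g ∈ Submonoid.closure S, nminus g = 0 := fun g hg => by
    rw [hminus]
    exact Nat.sInf_eq_zero.2 (Or.inl (SignedWord.zero_mem_negCounts hg))
  have hplus_mono : nplus a ≤ nplus b := by
    have hposCounts : SignedWord.posCounts S b ⊆ SignedWord.posCounts S a := by
      simpa using SignedWord.posCounts_subset_mul_inv b hc
    rw [hplus, hplus]
    exact csInf_le_csInf (OrderBot.bddBelow _) (SignedWord.posCounts_nonempty hb) hposCounts
  rw [hminus_zero a ha, hminus_zero b hb]
  omega

/-- If `S` is conjugation-invariant and the cone `C = ⟨S⟩` satisfies `C ∩ C⁻¹ = {1}`,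
then the oscillation norm is compatible with the order `≤_C`: `1 ≤_C a ≤_C b` implies
`ν_osc(a) ≤ ν_osc(b)`. -/
theorem stmt_11 {G : Type*} [Group G] (S : Set G)
    (hgen : ∀ g : G, ∃ l : List (G × Bool),
      (∀ p ∈ l, (p.2 = true → p.1 ∈ S) ∧ (p.2 = false → p.1⁻¹ ∈ S)) ∧
      (l.map Prod.fst).prod = g)
    (nplus nminus : G → ℕ)
    (hplus : ∀ g : G, nplus g = sInf {n : ℕ | ∃ l : List (G × Bool),
      (∀ p ∈ l, (p.2 = true → p.1 ∈ S) ∧ (p.2 = false → p.1⁻¹ ∈ S)) ∧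
      (l.map Prod.fst).prod = g ∧ l.countP (fun p => p.2) = n})
    (hminus : ∀ g : G, nminus g = sInf {n : ℕ | ∃ l : List (G × Bool),
      (∀ p ∈ l, (p.2 = true → p.1 ∈ S) ∧ (p.2 = false → p.1⁻¹ ∈ S)) ∧
      (l.map Prod.fst).prod = g ∧ l.countP (fun p => !p.2) = n})
    (hconjS : ∀ g : G, (fun x => g * x * g⁻¹) '' S ⊆ S)
    (hanti : ∀ g : G, g ∈ Submonoid.closure S → g⁻¹ ∈ Submonoid.closure S → g = 1) :
    ∀ a b : G, a ∈ Submonoid.closure S → a⁻¹ * b ∈ Submonoid.closure S →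
      (nplus a : ℤ) - (-(nminus a : ℤ)) ≤ (nplus b : ℤ) - (-(nminus b : ℤ)) :=
  stmt_11_general S nplus nminus hplus hminus
end
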